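/- Define real functions on a parameter u ∈ [0, u*] by g(u) = u·(y − F(u))/y^2 and R(u) = y/(y − F(u)), where y > 0 is fixed, F(u) = ∑_{n≥1} (3n)!/(n!n!(n+1)!) u^n, and u* ∈ (0,1/27) satisfies y = F(u*) + u*F'(u*). Then g is strictly increasing on [0, u*), g'(u*) = 0, and g''(u*) < 0. -/

import Mathlib

open Nat

/-- The coefficients `(3n)!/(n!·n!·(n+1)!)` (for `n ≥ 1`, and `0` for `n = 0`). -/
noncomputable def fcCoeff (n : ℕ) : ℝ :=
  if n = 0 then 0 else ((3 * n)! : ℝ) / ((n ! : ℝ) * (n !) * ((n + 1)!))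

/-- `F(u) = ∑_{n≥1} (3n)!/(n!·n!·(n+1)!) u^n`. -/
noncomputable def Fser (u : ℝ) : ℝ := ∑' n : ℕ, fcCoeff n * u ^ n

/-! Write `G u = F u + u F'(u)`, so that `g'(u) = (y - G u) / y²`. All coefficients of `F` are
nonnegative and `F'(0) = 3`, hence `G' = 2F' + u F'' > 0` on `[0, u*]`: `G` increases to
`G u* = y`, which gives `g' > 0` on `[0, u*)`, `g'(u*) = 0` and `g''(u*) = -G'(u*) / y² < 0`.
The bound `(3n)! ≤ 27ⁿ (n!)³` puts `[0, 1/27)` inside the disc of convergence of `F`, where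
`F` and `F'` are differentiated termwise. -/

open Set Topology FormalMultilinearSeries
open scoped NNReal

namespace FormalMultilinearSeries

section

variable {𝕜 F : Type*} [NontriviallyNormedField 𝕜] [NormedAddCommGroup F] [NormedSpace 𝕜 F]
  (p : FormalMultilinearSeries 𝕜 𝕜 F)

noncomputable def derivSeriesApplyOne : FormalMultilinearSeries 𝕜 𝕜 F :=
  (ContinuousLinearMap.apply 𝕜 F (1 : 𝕜)).compFormalMultilinearSeries p.derivSeries

theorem radius_le_radius_derivSeriesApplyOne : p.radius ≤ p.derivSeriesApplyOne.radius :=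
  p.radius_le_radius_derivSeries.trans (radius_le_radius_continuousLinearMap_comp _ _)

@[simp]
theorem coeff_derivSeriesApplyOne (n : ℕ) :
    p.derivSeriesApplyOne.coeff n = (n + 1) • p.coeff (n + 1) :=
  p.derivSeries_coeff_one n

variable [CompleteSpace F] {p} {x : 𝕜}

theorem hasDerivAt_sum (hx : ‖x‖ₑ < p.radius) :
    HasDerivAt p.sum (p.derivSeriesApplyOne.sum x) x := by
  have hsum := p.derivSeries.summable (x := x) (by
    rw [Metric.mem_eball, edist_zero_right]
    exact hx.trans_le p.radius_le_radius_derivSeries)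
  have := (p.hasFDerivAt_sum hx).hasDerivAt
  rwa [FormalMultilinearSeries.sum,
    ← ContinuousLinearMap.apply_apply (1 : 𝕜), ContinuousLinearMap.map_tsum _ hsum] at this

theorem deriv_sum (hx : ‖x‖ₑ < p.radius) : deriv p.sum x = p.derivSeriesApplyOne.sum x :=
  (hasDerivAt_sum hx).deriv

theorem deriv_sum_eventuallyEq (hx : ‖x‖ₑ < p.radius) :
    deriv p.sum =ᶠ[𝓝 x] p.derivSeriesApplyOne.sum := by
  have hball : Metric.eball (0 : 𝕜) p.radius ∈ 𝓝 x :=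
    Metric.isOpen_eball.mem_nhds (by rwa [Metric.mem_eball, edist_zero_right])
  filter_upwards [hball] with z hz
  exact deriv_sum (by rwa [Metric.mem_eball, edist_zero_right] at hz)

theorem hasDerivAt_deriv_sum (hx : ‖x‖ₑ < p.radius) :
    HasDerivAt (deriv p.sum) (p.derivSeriesApplyOne.derivSeriesApplyOne.sum x) x :=
  (hasDerivAt_sum (hx.trans_le p.radius_le_radius_derivSeriesApplyOne)).congr_of_eventuallyEq
    (deriv_sum_eventuallyEq hx)

end

section

variable {q : FormalMultilinearSeries ℝ ℝ ℝ} {x : ℝ}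

theorem coeff_derivSeriesApplyOne_nonneg (hq : ∀ n, 0 ≤ q.coeff n) (n : ℕ) :
    0 ≤ q.derivSeriesApplyOne.coeff n := by
  rw [coeff_derivSeriesApplyOne, nsmul_eq_mul]
  exact mul_nonneg (by positivity) (hq _)

theorem sum_nonneg_of_coeff_nonneg (hq : ∀ n, 0 ≤ q.coeff n) (hx : 0 ≤ x) : 0 ≤ q.sum x :=
  tsum_nonneg fun n => by
    rw [apply_eq_pow_smul_coeff, smul_eq_mul]
    exact mul_nonneg (pow_nonneg hx n) (hq n)

theorem coeff_zero_le_sum_of_coeff_nonneg (hq : ∀ n, 0 ≤ q.coeff n) (hx : 0 ≤ x)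
    (hr : ‖x‖ₑ < q.radius) : q.coeff 0 ≤ q.sum x := by
  have := le_hasSum (q.hasSum (by rwa [Metric.mem_eball, edist_zero_right])) 0 fun n _ => by
    rw [apply_eq_pow_smul_coeff, smul_eq_mul]
    exact mul_nonneg (pow_nonneg hx n) (hq n)
  simpa using this

end

end FormalMultilinearSeries

section

variable {F : ℝ → ℝ} {s : Set ℝ} {y u₀ u : ℝ}

theorem hasDerivAt_add_mul_deriv (hF : DifferentiableAt ℝ F u)
    (hF' : DifferentiableAt ℝ (deriv F) u) :
    HasDerivAt (fun u => F u + u * deriv F u) (2 * deriv F u + u * deriv (deriv F) u) u := by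
  refine (hF.hasDerivAt.add ((hasDerivAt_id' u).mul hF'.hasDerivAt)).congr_deriv ?_
  ring

theorem hasDerivAt_mul_sub_div (hF : DifferentiableAt ℝ F u) :
    HasDerivAt (fun u => u * (y - F u) / y ^ 2) ((y - (F u + u * deriv F u)) / y ^ 2) u := by
  refine (((hasDerivAt_id' u).mul (hF.hasDerivAt.const_sub y)).div_const
    (y ^ 2)).congr_deriv ?_
  ring

theorem strictMonoOn_add_mul_deriv (hs : IsOpen s) (hsub : Icc 0 u₀ ⊆ s)
    (hF : DifferentiableOn ℝ F s) (hF' : DifferentiableOn ℝ (deriv F) s)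
    (hpos : ∀ u ∈ Icc 0 u₀, 0 < deriv F u) (hnonneg : ∀ u ∈ Icc 0 u₀, 0 ≤ deriv (deriv F) u) :
    StrictMonoOn (fun u => F u + u * deriv F u) (Icc 0 u₀) := by
  have hG : ∀ u ∈ Icc 0 u₀, HasDerivAt (fun u => F u + u * deriv F u)
      (2 * deriv F u + u * deriv (deriv F) u) u := fun u hu =>
    hasDerivAt_add_mul_deriv (hF.differentiableAt (hs.mem_nhds (hsub hu)))
      (hF'.differentiableAt (hs.mem_nhds (hsub hu)))
  refine strictMonoOn_of_deriv_pos (convex_Icc 0 u₀)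
    (fun u hu => (hG u hu).continuousAt.continuousWithinAt) fun u hu => ?_
  have hu' := interior_subset hu
  rw [(hG u hu').deriv]
  have := mul_nonneg hu'.1 (hnonneg u hu')
  linarith [hpos u hu']

theorem strictMonoOn_mul_sub_div (hs : IsOpen s) (hsub : Icc 0 u₀ ⊆ s)
    (hF : DifferentiableOn ℝ F s) (hF' : DifferentiableOn ℝ (deriv F) s)
    (hpos : ∀ u ∈ Icc 0 u₀, 0 < deriv F u) (hnonneg : ∀ u ∈ Icc 0 u₀, 0 ≤ deriv (deriv F) u)
    (hy : y ≠ 0) (hstar : y = F u₀ + u₀ * deriv F u₀) :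
    StrictMonoOn (fun u => u * (y - F u) / y ^ 2) (Ico 0 u₀) := by
  have hg : ∀ u ∈ Ico 0 u₀, HasDerivAt (fun u => u * (y - F u) / y ^ 2)
      ((y - (F u + u * deriv F u)) / y ^ 2) u := fun u hu =>
    hasDerivAt_mul_sub_div (hF.differentiableAt (hs.mem_nhds (hsub (Ico_subset_Icc_self hu))))
  refine strictMonoOn_of_deriv_pos (convex_Ico 0 u₀)
    (fun u hu => (hg u hu).continuousAt.continuousWithinAt) fun u hu => ?_
  rw [interior_Ico] at hu
  rw [(hg u (Ioo_subset_Ico_self hu)).deriv]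
  have hlt : F u + u * deriv F u < y := hstar ▸
    strictMonoOn_add_mul_deriv hs hsub hF hF' hpos hnonneg (Ioo_subset_Icc_self hu)
      (right_mem_Icc.2 (hu.1.le.trans hu.2.le)) hu.2
  exact div_pos (sub_pos.2 hlt) (by positivity)

theorem deriv_mul_sub_div_eq_zero (hF : DifferentiableAt ℝ F u₀)
    (hstar : y = F u₀ + u₀ * deriv F u₀) :
    deriv (fun u => u * (y - F u) / y ^ 2) u₀ = 0 := by
  rw [(hasDerivAt_mul_sub_div hF).deriv, ← hstar, sub_self, zero_div]

theorem iteratedDeriv_two_mul_sub_div_neg (hs : IsOpen s) (hu₀s : u₀ ∈ s)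
    (hF : DifferentiableOn ℝ F s) (hF' : DifferentiableOn ℝ (deriv F) s)
    (hpos : 0 < deriv F u₀) (hnonneg : 0 ≤ u₀ * deriv (deriv F) u₀) (hy : y ≠ 0) :
    iteratedDeriv 2 (fun u => u * (y - F u) / y ^ 2) u₀ < 0 := by
  have hg : deriv (fun u => u * (y - F u) / y ^ 2) =ᶠ[𝓝 u₀]
      fun u => (y - (F u + u * deriv F u)) / y ^ 2 := by
    filter_upwards [hs.mem_nhds hu₀s] with u hu
    exact (hasDerivAt_mul_sub_div (hF.differentiableAt (hs.mem_nhds hu))).deriv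
  have hG := hasDerivAt_add_mul_deriv (hF.differentiableAt (hs.mem_nhds hu₀s))
    (hF'.differentiableAt (hs.mem_nhds hu₀s))
  rw [iteratedDeriv_succ, iteratedDeriv_one, hg.deriv_eq,
    ((hG.const_sub y).div_const (y ^ 2)).deriv]
  exact div_neg_of_neg_of_pos (by linarith) (by positivity)

end

theorem factorial_three_mul_le (n : ℕ) : (3 * n)! ≤ 27 ^ n * n ! ^ 3 := by
  induction n with
  | zero => simp
  | succ n ih =>
    calc (3 * (n + 1))! = (3 * n + 3) * ((3 * n + 2) * ((3 * n + 1) * (3 * n)!)) := by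
          rw [show 3 * (n + 1) = 3 * n + 2 + 1 by ring, factorial_succ, factorial_succ,
            factorial_succ]
      _ ≤ (3 * n + 3) * ((3 * n + 3) * ((3 * n + 3) * (27 ^ n * n ! ^ 3))) := by
          gcongr <;> omega
      _ = 27 ^ (n + 1) * (n + 1)! ^ 3 := by rw [factorial_succ]; ring

theorem fcCoeff_nonneg (n : ℕ) : 0 ≤ fcCoeff n := by
  unfold fcCoeff
  split_ifs <;> positivity

theorem fcCoeff_one : fcCoeff 1 = 3 := by
  norm_num [fcCoeff, factorial]

theorem fcCoeff_le_pow (n : ℕ) : fcCoeff n ≤ 27 ^ n := by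
  unfold fcCoeff
  split_ifs
  · positivity
  have hfac : (n ! : ℝ) ^ 3 ≤ n ! * n ! * (n + 1)! := by
    rw [pow_three, ← mul_assoc]
    gcongr
    exact n.le_succ
  rw [div_le_iff₀ (by positivity)]
  calc ((3 * n)! : ℝ) ≤ 27 ^ n * n ! ^ 3 := by exact_mod_cast factorial_three_mul_le n
    _ ≤ 27 ^ n * (n ! * n ! * (n + 1)!) := by gcongr

theorem Fser_eq_sum : Fser = (ofScalars ℝ fcCoeff).sum :=
  funext fun u => (ofScalars_sum_eq fcCoeff u).symm

theorem enorm_lt_radius_ofScalars_fcCoeff {u : ℝ} (hu : |u| < 1 / 27) :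
    ‖u‖ₑ < (ofScalars ℝ fcCoeff).radius := by
  have hradius : ((27⁻¹ : ℝ≥0) : ENNReal) ≤ (ofScalars ℝ fcCoeff).radius := by
    refine le_radius_of_bound _ 1 fun n => ?_
    rw [ofScalars_norm, Real.norm_of_nonneg (fcCoeff_nonneg n), NNReal.coe_inv, inv_pow,
      ← div_eq_mul_inv, div_le_one (by positivity)]
    exact_mod_cast fcCoeff_le_pow n
  refine lt_of_lt_of_le ?_ hradius
  rw [← ofReal_norm, ENNReal.ofReal_lt_iff_lt_toReal (norm_nonneg u) (by simp)]
  simpa using hu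

theorem hasDerivAt_Fser {u : ℝ} (hu : |u| < 1 / 27) :
    HasDerivAt Fser ((ofScalars ℝ fcCoeff).derivSeriesApplyOne.sum u) u :=
  Fser_eq_sum ▸ hasDerivAt_sum (enorm_lt_radius_ofScalars_fcCoeff hu)

theorem hasDerivAt_deriv_Fser {u : ℝ} (hu : |u| < 1 / 27) :
    HasDerivAt (deriv Fser)
      ((ofScalars ℝ fcCoeff).derivSeriesApplyOne.derivSeriesApplyOne.sum u) u :=
  Fser_eq_sum ▸ hasDerivAt_deriv_sum (enorm_lt_radius_ofScalars_fcCoeff hu)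

theorem differentiableOn_Fser : DifferentiableOn ℝ Fser (Ioo (-(1 / 27)) (1 / 27)) :=
  fun _ hu => (hasDerivAt_Fser (abs_lt.2 hu)).differentiableAt.differentiableWithinAt

theorem differentiableOn_deriv_Fser : DifferentiableOn ℝ (deriv Fser) (Ioo (-(1 / 27)) (1 / 27)) :=
  fun _ hu => (hasDerivAt_deriv_Fser (abs_lt.2 hu)).differentiableAt.differentiableWithinAt

theorem coeff_ofScalars_fcCoeff_nonneg (n : ℕ) : 0 ≤ (ofScalars ℝ fcCoeff).coeff n := by
  rw [coeff_ofScalars]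
  exact fcCoeff_nonneg n

theorem deriv_Fser_pos {u : ℝ} (hu₀ : 0 ≤ u) (hu : u < 1 / 27) : 0 < deriv Fser u := by
  have habs : |u| < 1 / 27 := by rwa [abs_of_nonneg hu₀]
  rw [(hasDerivAt_Fser habs).deriv]
  refine lt_of_lt_of_le ?_ (coeff_zero_le_sum_of_coeff_nonneg
    (coeff_derivSeriesApplyOne_nonneg coeff_ofScalars_fcCoeff_nonneg) hu₀
    ((enorm_lt_radius_ofScalars_fcCoeff habs).trans_le
      (radius_le_radius_derivSeriesApplyOne _)))
  simp [coeff_ofScalars, fcCoeff_one]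

theorem deriv_deriv_Fser_nonneg {u : ℝ} (hu₀ : 0 ≤ u) (hu : u < 1 / 27) :
    0 ≤ deriv (deriv Fser) u := by
  rw [(hasDerivAt_deriv_Fser (by rwa [abs_of_nonneg hu₀])).deriv]
  exact sum_nonneg_of_coeff_nonneg (coeff_derivSeriesApplyOne_nonneg
    (coeff_derivSeriesApplyOne_nonneg coeff_ofScalars_fcCoeff_nonneg)) hu₀

/-- With `y > 0` fixed and `u* ∈ (0,1/27)` the solution of `y = F(u*) + u*F'(u*)`,
the function `g(u) = u(y − F(u))/y²` is strictly increasing on `[0, u*)`,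
has `g'(u*) = 0` and `g''(u*) < 0`. -/
theorem stmt_9 (y ustar : ℝ) (hy : 0 < y) (hu : ustar ∈ Set.Ioo (0 : ℝ) (1 / 27))
    (hstar : y = Fser ustar + ustar * deriv Fser ustar) :
    StrictMonoOn (fun u : ℝ => u * (y - Fser u) / y ^ 2) (Set.Ico 0 ustar) ∧
    deriv (fun u : ℝ => u * (y - Fser u) / y ^ 2) ustar = 0 ∧
    iteratedDeriv 2 (fun u : ℝ => u * (y - Fser u) / y ^ 2) ustar < 0 := by
  obtain ⟨hu₀, hu27⟩ := hu
  have hball : Icc 0 ustar ⊆ Ioo (-(1 / 27)) (1 / 27) := fun u hu =>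
    ⟨by linarith [hu.1], hu.2.trans_lt hu27⟩
  have hpos : ∀ u ∈ Icc 0 ustar, 0 < deriv Fser u := fun u hu =>
    deriv_Fser_pos hu.1 (hu.2.trans_lt hu27)
  have hnonneg : ∀ u ∈ Icc 0 ustar, 0 ≤ deriv (deriv Fser) u := fun u hu =>
    deriv_deriv_Fser_nonneg hu.1 (hu.2.trans_lt hu27)
  have hstar_mem : ustar ∈ Icc 0 ustar := right_mem_Icc.2 hu₀.le
  exact ⟨strictMonoOn_mul_sub_div isOpen_Ioo hball differentiableOn_Fser
      differentiableOn_deriv_Fser hpos hnonneg hy.ne' hstar,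
    deriv_mul_sub_div_eq_zero (hasDerivAt_Fser (abs_lt.2 (hball hstar_mem))).differentiableAt
      hstar,
    iteratedDeriv_two_mul_sub_div_neg isOpen_Ioo (hball hstar_mem) differentiableOn_Fser
      differentiableOn_deriv_Fser (hpos _ hstar_mem) (mul_nonneg hu₀.le (hnonneg _ hstar_mem))
      hy.ne'⟩
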